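/- Let y_{(i),d} for i = 1,...,I and d = 1,...,J be independent Poisson random variables where y_{(i),d} has rate x_{(i)}^T b_d, under two parameter choices B = [b_1,...,b_J]^T and B' = [b'_1,...,b'_J]^T in ℝ^{J×L} with all entries at least β > 0. Suppose the covariates x_{(i)} ∈ ℝ_{≥0}^L satisfy ξ := min_i ‖x_{(i)}‖_1 > 0, and let X = [x_{(1)},...,x_{(I)}]. Then the KL divergence between the joint distribution under B and under B' is at most (‖X‖_2² / (β ξ)) · ‖B − B'‖_F², where ‖X‖_2 is the spectral norm of X. -/

import Mathlib

/-!
The joint law is a product of independent Poisson laws, and the KL divergence of a product of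
independent laws is the sum of the coordinatewise divergences: after expanding the logarithm of
the product, each summand only involves one coordinate, whose other factors sum to `1`. For
Poisson laws `KL(Po μ ‖ Po ν) = μ log (μ / ν) - μ + ν ≤ (μ - ν)² / ν` by `log x ≤ x - 1`, and every
rate is at least `β ξ`. For fixed `d` the differences of the rates form the vector
`X (b_d - b'_d)`, whose squared norm is at most `‖X‖₂² ‖b_d - b'_d‖²`.
-/

open Real Finset
open scoped Matrix

noncomputable def poisPdf (μ : ℝ) (k : ℕ) : ℝ :=
  Real.exp (-μ) * μ ^ k / (Nat.factorial k)

lemma poisPdf_ne_zero {μ : ℝ} (hμ : μ ≠ 0) (k : ℕ) : poisPdf μ k ≠ 0 := by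
  unfold poisPdf
  positivity

lemma hasSum_poisPdf (μ : ℝ) : HasSum (poisPdf μ) 1 := by
  have h := (NormedSpace.expSeries_div_hasSum_exp μ).mul_left (exp (-μ))
  rw [← exp_eq_exp_ℝ, ← exp_add, neg_add_cancel, exp_zero] at h
  exact h.congr_fun fun k => mul_div_assoc _ _ _

lemma succ_mul_poisPdf_succ (μ : ℝ) (k : ℕ) :
    ((k : ℝ) + 1) * poisPdf μ (k + 1) = μ * poisPdf μ k := by
  simp only [poisPdf, Nat.factorial_succ, Nat.cast_mul, Nat.cast_succ]
  field_simp
  ring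

lemma hasSum_nat_mul_poisPdf (μ : ℝ) : HasSum (fun k : ℕ => k * poisPdf μ k) μ := by
  rw [← hasSum_nat_add_iff' 1]
  simpa [succ_mul_poisPdf_succ] using (hasSum_poisPdf μ).mul_left μ

lemma poisPdf_div_poisPdf (μ : ℝ) {ν : ℝ} (hν : ν ≠ 0) (k : ℕ) :
    poisPdf μ k / poisPdf ν k = exp (ν - μ) * (μ / ν) ^ k := by
  simp only [poisPdf, exp_sub, exp_neg, div_pow]
  field_simp

lemma hasSum_poisPdf_mul_log_div {μ ν : ℝ} (hμ : μ ≠ 0) (hν : ν ≠ 0) :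
    HasSum (fun k => poisPdf μ k * log (poisPdf μ k / poisPdf ν k))
      (μ * log (μ / ν) - μ + ν) := by
  have hlog (k : ℕ) : log (poisPdf μ k / poisPdf ν k) = (ν - μ) + k * log (μ / ν) := by
    rw [poisPdf_div_poisPdf μ hν, log_mul (exp_ne_zero _) (by positivity), log_exp, log_pow]
  have h := ((hasSum_poisPdf μ).mul_left (ν - μ)).add
    ((hasSum_nat_mul_poisPdf μ).mul_left (log (μ / ν)))
  rw [show (ν - μ) * 1 + log (μ / ν) * μ = μ * log (μ / ν) - μ + ν by ring] at h
  exact h.congr_fun fun k => by rw [hlog]; ring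

lemma mul_log_div_sub_add_le {μ ν : ℝ} (hμ : 0 < μ) (hν : 0 < ν) :
    μ * log (μ / ν) - μ + ν ≤ (μ - ν) ^ 2 / ν := by
  have hlog : μ * log (μ / ν) ≤ μ * (μ / ν - 1) :=
    mul_le_mul_of_nonneg_left (log_le_sub_one_of_pos (div_pos hμ hν)) hμ.le
  have hsq : μ * (μ / ν - 1) - μ + ν = (μ - ν) ^ 2 / ν := by
    field_simp
    ring
  linarith

lemma Fin.hasSum_pi_prod {n : ℕ} {α : Fin n → Type*} {f : ∀ i, α i → ℝ} {a : Fin n → ℝ}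
    (hf : ∀ i, HasSum (f i) (a i)) :
    HasSum (fun y : ∀ i, α i => ∏ i, f i (y i)) (∏ i, a i) := by
  induction n with
  | zero => simp
  | succ n ih =>
    have htail := ih (α := fun i => α i.succ) (f := fun i => f i.succ) fun i => hf i.succ
    have hsum := summable_mul_of_summable_norm (hf 0).summable.norm htail.summable.norm
    have hmul := (hf 0).mul htail hsum
    rw [Fin.prod_univ_succ, ← (Fin.consEquiv α).hasSum_iff]
    exact hmul.congr_fun fun q => by simp [Fin.prod_univ_succ]

lemma hasSum_pi_prod {ι : Type*} [Fintype ι] {α : ι → Type*} {f : ∀ i, α i → ℝ} {a : ι → ℝ}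
    (hf : ∀ i, HasSum (f i) (a i)) :
    HasSum (fun y : ∀ i, α i => ∏ i, f i (y i)) (∏ i, a i) := by
  let e := Fintype.equivFin ι
  have h := Fin.hasSum_pi_prod (α := fun j => α (e.symm j)) fun j => hf (e.symm j)
  rw [Equiv.prod_comp e.symm a, ← (Equiv.piCongrLeft' α e).hasSum_iff] at h
  exact h.congr_fun fun y => (Equiv.prod_comp e.symm fun i => f i (y i)).symm

lemma hasSum_pi_prod_mul_sum {ι : Type*} [Fintype ι] {α : ι → Type*}
    {f g : ∀ i, α i → ℝ} {c : ι → ℝ} (hf : ∀ i, HasSum (f i) 1)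
    (hfg : ∀ i, HasSum (fun k => f i k * g i k) (c i)) :
    HasSum (fun y : ∀ i, α i => (∏ i, f i (y i)) * ∑ i, g i (y i)) (∑ i, c i) := by
  classical
  simp only [mul_sum]
  refine hasSum_sum fun i _ => ?_
  -- the `i`-th summand is the product family with its `i`-th factor `f i` replaced by `f i * g i`
  have h := hasSum_pi_prod (f := fun j k => f j k * if j = i then g j k else 1)
    (a := fun j => if j = i then c j else 1) fun j => by
      split_ifs with hj
      · subst hj; exact hfg j
      · simpa using hf j
  simp only [prod_mul_distrib, prod_ite_eq', mem_univ, if_true] at h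
  exact h

lemma hasSum_pi_prod_mul_log_div {ι : Type*} [Fintype ι] {α : ι → Type*} {P Q : ∀ i, α i → ℝ}
    {D : ι → ℝ} (hP : ∀ i, HasSum (P i) 1) (hP0 : ∀ i k, P i k ≠ 0) (hQ0 : ∀ i k, Q i k ≠ 0)
    (hD : ∀ i, HasSum (fun k => P i k * log (P i k / Q i k)) (D i)) :
    HasSum (fun y : ∀ i, α i => (∏ i, P i (y i)) * log ((∏ i, P i (y i)) / ∏ i, Q i (y i)))
      (∑ i, D i) :=
  (hasSum_pi_prod_mul_sum hP hD).congr_fun fun y => by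
    rw [← prod_div_distrib, log_prod fun i _ => div_ne_zero (hP0 i _) (hQ0 i _)]

lemma hasSum_pi_poisPdf_mul_log_div {ι : Type*} [Fintype ι] {μ ν : ι → ℝ}
    (hμ : ∀ i, μ i ≠ 0) (hν : ∀ i, ν i ≠ 0) :
    HasSum (fun y : ι → ℕ => (∏ i, poisPdf (μ i) (y i)) *
        log ((∏ i, poisPdf (μ i) (y i)) / ∏ i, poisPdf (ν i) (y i)))
      (∑ i, (μ i * log (μ i / ν i) - μ i + ν i)) :=
  hasSum_pi_prod_mul_log_div (P := fun i => poisPdf (μ i)) (Q := fun i => poisPdf (ν i))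
    (fun _ => hasSum_poisPdf _) (fun i => poisPdf_ne_zero (hμ i))
    (fun i => poisPdf_ne_zero (hν i)) fun i => hasSum_poisPdf_mul_log_div (hμ i) (hν i)

lemma mul_sum_abs_le_dotProduct {ι : Type*} [Fintype ι] {x b : ι → ℝ} {β : ℝ}
    (hx : ∀ i, 0 ≤ x i) (hb : ∀ i, β ≤ b i) : β * ∑ i, |x i| ≤ x ⬝ᵥ b := by
  rw [mul_sum]
  refine sum_le_sum fun i _ => ?_
  rw [abs_of_nonneg (hx i), mul_comm]
  exact mul_le_mul_of_nonneg_left (hb i) (hx i)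

-- `‖Aᵀ‖ = ‖A‖` because `Aᵀ` is the adjoint of `A`.
open scoped Matrix.Norms.L2Operator in
lemma sum_sq_mulVec_le {m n : Type*} [Fintype m] [Fintype n] [DecidableEq m]
    (A : Matrix m n ℝ) (c : n → ℝ) :
    ∑ i, (A *ᵥ c) i ^ 2 ≤
      ‖LinearMap.toContinuousLinearMap (Matrix.toEuclideanLin Aᵀ)‖ ^ 2 * ∑ j, c j ^ 2 := by
  classical
  have h := pow_le_pow_left₀ (norm_nonneg _) (A.l2_opNorm_mulVec (WithLp.toLp 2 c)) 2
  rw [← Matrix.l2_opNorm_conjTranspose, Matrix.conjTranspose_eq_transpose_of_trivial, mul_pow,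
    EuclideanSpace.norm_sq_eq, EuclideanSpace.norm_sq_eq] at h
  simpa [Matrix.l2_opNorm_def] using h

/-- KL divergence bound.  Independent Poisson observations
`y (i) d ~ Poisson (x (i) ⬝ b d)` under two parameter matrices `B, B'` with all entries at
least `β > 0`; the KL divergence of the joint distributions is at most
`‖X‖₂² / (β ξ) · ‖B − B'‖_F²`. -/
theorem kl_divergence_bound
    (I J L : ℕ) (hI : 0 < I)
    (X : Fin I → Fin L → ℝ) (hX : ∀ i l, 0 ≤ X i l)
    (B B' : Matrix (Fin J) (Fin L) ℝ) (β : ℝ) (hβ : 0 < β)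
    (hB : ∀ d l, β ≤ B d l) (hB' : ∀ d l, β ≤ B' d l)
    -- ξ := minᵢ ‖x₍ᵢ₎‖₁
    (ξ : ℝ)
    (hξ : ξ = Finset.univ.inf' ⟨⟨0, hI⟩, Finset.mem_univ _⟩ (fun i => ∑ l, |X i l|))
    (hξpos : 0 < ξ)
    -- joint pmf of all the independent Poisson observations, for parameter matrix `C`
    (p : Matrix (Fin J) (Fin L) ℝ → (Fin I → Fin J → ℕ) → ℝ)
    (hp : ∀ C y, p C y = ∏ i, ∏ d, poisPdf (∑ l, X i l * C d l) (y i d)) :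
    (∑' y : Fin I → Fin J → ℕ, p B y * Real.log (p B y / p B' y)) ≤
      ‖LinearMap.toContinuousLinearMap
          (Matrix.toEuclideanLin (Matrix.of fun l i => X i l))‖ ^ 2 / (β * ξ) *
        ∑ d, ∑ l, (B d l - B' d l) ^ 2 := by
  set μ : Fin I → Fin J → ℝ := fun i d => ∑ l, X i l * B d l
  set ν : Fin I → Fin J → ℝ := fun i d => ∑ l, X i l * B' d l
  have hβξ : 0 < β * ξ := mul_pos hβ hξpos
  have hrate : ∀ C : Matrix (Fin J) (Fin L) ℝ, (∀ d l, β ≤ C d l) →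
      ∀ i d, β * ξ ≤ ∑ l, X i l * C d l := fun C hC i d =>
    (mul_le_mul_of_nonneg_left (hξ ▸ inf'_le _ (mem_univ i)) hβ.le).trans
      (mul_sum_abs_le_dotProduct (hX i) (hC d))
  have hμ i d : 0 < μ i d := hβξ.trans_le (hrate B hB i d)
  have hν i d : 0 < ν i d := hβξ.trans_le (hrate B' hB' i d)
  have hKL : HasSum (fun y => p B y * log (p B y / p B' y))
      (∑ i, ∑ d, (μ i d * log (μ i d / ν i d) - μ i d + ν i d)) := by
    simp only [hp]
    refine hasSum_pi_prod_mul_log_div (α := fun _ => Fin J → ℕ)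
      (P := fun i z => ∏ d, poisPdf (μ i d) (z d)) (Q := fun i z => ∏ d, poisPdf (ν i d) (z d))
      (fun i => ?_)
      (fun i _ => prod_ne_zero_iff.mpr fun d _ => poisPdf_ne_zero (hμ i d).ne' _)
      (fun i _ => prod_ne_zero_iff.mpr fun d _ => poisPdf_ne_zero (hν i d).ne' _)
      fun i => hasSum_pi_poisPdf_mul_log_div (fun d => (hμ i d).ne') fun d => (hν i d).ne'
    simpa using hasSum_pi_prod fun d => hasSum_poisPdf (μ i d)
  calc ∑' y, p B y * log (p B y / p B' y)
      = ∑ i, ∑ d, (μ i d * log (μ i d / ν i d) - μ i d + ν i d) := hKL.tsum_eq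
    _ ≤ ∑ i, ∑ d, (μ i d - ν i d) ^ 2 / (β * ξ) := by
        gcongr with i _ d _
        exact (mul_log_div_sub_add_le (hμ i d) (hν i d)).trans
          (div_le_div_of_nonneg_left (sq_nonneg _) hβξ (hrate B' hB' i d))
    _ = (∑ d, ∑ i, (X *ᵥ (B d - B' d)) i ^ 2) / (β * ξ) := by
        simp only [μ, ν, sum_div, Matrix.mulVec, dotProduct, Pi.sub_apply, mul_sub,
          sum_sub_distrib]
        exact sum_comm
    _ ≤ (∑ d, ‖LinearMap.toContinuousLinearMap
          (Matrix.toEuclideanLin (Matrix.of fun l i => X i l))‖ ^ 2 *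
            ∑ l, (B d - B' d) l ^ 2) / (β * ξ) := by
        gcongr with d _
        exact sum_sq_mulVec_le X (B d - B' d)
    _ = _ := by
        rw [← mul_sum]
        simp only [Pi.sub_apply]
        ring
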